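/- arXiv:2106.13070 — 2 statements merged into one kernel-verified Lean document; each statement's English description precedes it below -/
import Mathlib

section
/- Let I ⊆ ℝ be an interval and p ≥ 2. If M : I^p → I^p is a contractive mean-type mapping (not necessarily continuous), then there exists at most one continuous mean K : I^p → I satisfying K ∘ M = K. -/
open Set Filter Topology

noncomputable def vmax {p : ℕ} (v : Fin p → ℝ) : ℝ := ⨆ i, v i
noncomputable def vmin {p : ℕ} (v : Fin p → ℝ) : ℝ := ⨅ i, v i

/-- The "box" `I^p`. -/
def box (I : Set ℝ) (p : ℕ) : Set (Fin p → ℝ) := {v | ∀ i, v i ∈ I}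

/-- `K` is a mean on `I^p`: internality. -/
def IsMeanOn (I : Set ℝ) (p : ℕ) (K : (Fin p → ℝ) → ℝ) : Prop :=
  ∀ v ∈ box I p, vmin v ≤ K v ∧ K v ≤ vmax v

/-- `M` is a mean-type mapping: each coordinate is a mean. -/
def MeanType (I : Set ℝ) (p : ℕ) (M : (Fin p → ℝ) → (Fin p → ℝ)) : Prop :=
  ∀ v ∈ box I p, ∀ i, vmin v ≤ M v i ∧ M v i ≤ vmax v

def Nonconstant {p : ℕ} (v : Fin p → ℝ) : Prop := ¬ ∃ c, ∀ i, v i = c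

def Contractive (I : Set ℝ) (p : ℕ) (M : (Fin p → ℝ) → (Fin p → ℝ)) : Prop :=
  ∀ v ∈ box I p, Nonconstant v → vmax (M v) - vmin (M v) < vmax v - vmin v

def WeaklyContractive (I : Set ℝ) (p : ℕ) (M : (Fin p → ℝ) → (Fin p → ℝ)) : Prop :=
  ∀ v ∈ box I p, Nonconstant v → ∃ n₀ : ℕ, ∀ n ≥ n₀,
    vmax (M^[n] v) - vmin (M^[n] v) < vmax v - vmin v

/-- `T(a) = {v ∈ I^p : max v - min v ≤ a}`. -/
def Tset (I : Set ℝ) (p : ℕ) (a : ℝ) : Set (Fin p → ℝ) :=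
  {v ∈ box I p | vmax v - vmin v ≤ a}

/-!
Fix `v ∈ I^p` and let `A` be the set of points of the cube `[min v, max v]^p` on which `K₁` and
`K₂` take the values `K₁ v` and `K₂ v`. It is compact, since the cube lies in `I^p` where both
means are continuous, and `M` maps it into itself, since `M` is mean-type and both means are
`M`-invariant. The spread `max - min` attains its minimum on `A` at some `w`; by contractivity `w`
cannot be nonconstant, and on a constant vector every mean takes the common value. Hence
`K₁ v = K₁ w = K₂ w = K₂ v`.
-/

section Spread

variable {p : ℕ}

lemma le_vmax (v : Fin p → ℝ) (i : Fin p) : v i ≤ vmax v :=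
  le_ciSup (Set.finite_range v).bddAbove i

lemma vmin_le (v : Fin p → ℝ) (i : Fin p) : vmin v ≤ v i :=
  ciInf_le (Set.finite_range v).bddBelow i

variable [NeZero p]

lemma le_vmin {v : Fin p → ℝ} {a : ℝ} (h : ∀ i, a ≤ v i) : a ≤ vmin v :=
  le_ciInf h

lemma vmax_le {v : Fin p → ℝ} {b : ℝ} (h : ∀ i, v i ≤ b) : vmax v ≤ b :=
  ciSup_le h

lemma exists_eq_vmax (v : Fin p → ℝ) : ∃ i, v i = vmax v := by
  obtain ⟨i, hi⟩ := Finite.exists_max v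
  exact ⟨i, le_antisymm (le_vmax v i) (vmax_le hi)⟩

lemma exists_eq_vmin (v : Fin p → ℝ) : ∃ i, v i = vmin v := by
  obtain ⟨i, hi⟩ := Finite.exists_min v
  exact ⟨i, le_antisymm (le_vmin hi) (vmin_le v i)⟩

lemma vmin_le_vmax (v : Fin p → ℝ) : vmin v ≤ vmax v :=
  (vmin_le v 0).trans (le_vmax v 0)

lemma continuous_vmax : Continuous (vmax : (Fin p → ℝ) → ℝ) := by
  rw [show (vmax : (Fin p → ℝ) → ℝ) = fun v => Finset.univ.sup' Finset.univ_nonempty v from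
    funext fun v => (Finset.sup'_univ_eq_ciSup v).symm]
  exact Continuous.finset_sup'_apply _ fun i _ => continuous_apply i

lemma continuous_vmin : Continuous (vmin : (Fin p → ℝ) → ℝ) := by
  rw [show (vmin : (Fin p → ℝ) → ℝ) = fun v => Finset.univ.inf' Finset.univ_nonempty v from
    funext fun v => (Finset.inf'_univ_eq_ciInf v).symm]
  exact Continuous.finset_inf'_apply _ fun i _ => continuous_apply i

lemma nonconstant_of_vmin_lt_vmax {v : Fin p → ℝ} (h : vmin v < vmax v) : Nonconstant v := by
  rintro ⟨c, hc⟩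
  obtain ⟨i, hi⟩ := exists_eq_vmin v
  obtain ⟨j, hj⟩ := exists_eq_vmax v
  rw [← hi, ← hj, hc i, hc j] at h
  exact h.false

end Spread

lemma IsMeanOn.apply_eq_vmax {I : Set ℝ} {p : ℕ} {K : (Fin p → ℝ) → ℝ} (hK : IsMeanOn I p K)
    {v : Fin p → ℝ} (hv : v ∈ box I p) (hconst : vmax v = vmin v) : K v = vmax v :=
  le_antisymm (hK v hv).2 (hconst ▸ (hK v hv).1)

section Cube

variable {I : Set ℝ} {p : ℕ} [NeZero p]

lemma Icc_vmin_vmax_subset_box (hI : I.OrdConnected) {v : Fin p → ℝ} (hv : v ∈ box I p) :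
    Icc (fun _ => vmin v) (fun _ => vmax v) ⊆ box I p := by
  obtain ⟨i, hi⟩ := exists_eq_vmin v
  obtain ⟨j, hj⟩ := exists_eq_vmax v
  intro w hw k
  exact hI.out (hi ▸ hv i) (hj ▸ hv j) ⟨hw.1 k, hw.2 k⟩

lemma MeanType.mapsTo_Icc {M : (Fin p → ℝ) → (Fin p → ℝ)} (hM : MeanType I p M) {a b : ℝ}
    (hab : Icc (fun _ => a) (fun _ => b) ⊆ box I p) :
    MapsTo M (Icc (fun _ => a) (fun _ => b)) (Icc (fun _ => a) (fun _ => b)) := fun w hw =>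
  ⟨fun i => (le_vmin hw.1).trans (hM w (hab hw) i).1,
    fun i => (hM w (hab hw) i).2.trans (vmax_le hw.2)⟩

lemma Contractive.exists_vmax_eq_vmin {M : (Fin p → ℝ) → (Fin p → ℝ)} (hM : Contractive I p M)
    {A : Set (Fin p → ℝ)} (hA : IsCompact A) (hAne : A.Nonempty) (hAbox : A ⊆ box I p)
    (hMA : MapsTo M A A) : ∃ w ∈ A, vmax w = vmin w := by
  obtain ⟨w, hwA, hwmin⟩ :=
    hA.exists_isMinOn hAne (continuous_vmax.sub continuous_vmin).continuousOn
  refine ⟨w, hwA, by_contra fun hne => ?_⟩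
  have hw : Nonconstant w := nonconstant_of_vmin_lt_vmax ((vmin_le_vmax w).lt_of_ne' hne)
  exact (hM w (hAbox hwA) hw).not_ge (hwmin (hMA hwA))

end Cube

lemma mapsTo_inter_preimage_singleton {X Y : Type*} {M : X → X} {K : X → Y} {S : Set X}
    (hMS : MapsTo M S S) (hK : ∀ x ∈ S, K (M x) = K x) (y : Y) :
    MapsTo M (S ∩ K ⁻¹' {y}) (S ∩ K ⁻¹' {y}) := fun x hx =>
  ⟨hMS hx.1, (hK x hx.1).trans hx.2⟩

lemma IsCompact.inter_preimage_singleton {X Y : Type*} [TopologicalSpace X] [TopologicalSpace Y]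
    [T1Space Y] {S T : Set X} {K : X → Y} (hS : IsCompact S) (hSc : IsClosed S) (hST : S ⊆ T)
    (hK : ContinuousOn K T) (y : Y) : IsCompact (S ∩ K ⁻¹' {y}) :=
  hS.of_isClosed_subset
    ((hK.mono hST).preimage_isClosed_of_isClosed hSc isClosed_singleton) inter_subset_left

theorem stmt0 (I : Set ℝ) (hI : I.OrdConnected) (p : ℕ) (hp : 2 ≤ p)
    (M : (Fin p → ℝ) → (Fin p → ℝ)) (hMT : MeanType I p M) (hC : Contractive I p M)
    (K₁ K₂ : (Fin p → ℝ) → ℝ)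
    (h₁m : IsMeanOn I p K₁) (h₁c : ContinuousOn K₁ (box I p))
    (h₁i : ∀ v ∈ box I p, K₁ (M v) = K₁ v)
    (h₂m : IsMeanOn I p K₂) (h₂c : ContinuousOn K₂ (box I p))
    (h₂i : ∀ v ∈ box I p, K₂ (M v) = K₂ v) :
    ∀ v ∈ box I p, K₁ v = K₂ v := by
  have : NeZero p := ⟨by omega⟩
  intro v hv
  set cube := Icc (fun _ => vmin v) (fun _ => vmax v)
  have hcube : cube ⊆ box I p := Icc_vmin_vmax_subset_box hI hv
  have hvcube : v ∈ cube := ⟨vmin_le v, le_vmax v⟩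
  have hMcube : MapsTo M cube cube := hMT.mapsTo_Icc hcube
  set A := (cube ∩ K₁ ⁻¹' {K₁ v}) ∩ (cube ∩ K₂ ⁻¹' {K₂ v})
  have hA : IsCompact A :=
    (isCompact_Icc.inter_preimage_singleton isClosed_Icc hcube h₁c _).inter
      (isCompact_Icc.inter_preimage_singleton isClosed_Icc hcube h₂c _)
  have hMA : MapsTo M A A :=
    (mapsTo_inter_preimage_singleton hMcube (fun w hw => h₁i w (hcube hw)) _).inter_inter
      (mapsTo_inter_preimage_singleton hMcube (fun w hw => h₂i w (hcube hw)) _)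
  obtain ⟨w, ⟨⟨hwcube, hw₁⟩, -, hw₂⟩, hconst⟩ :=
    hC.exists_vmax_eq_vmin hA ⟨v, ⟨hvcube, rfl⟩, hvcube, rfl⟩
      (inter_subset_left.trans (inter_subset_left.trans hcube)) hMA
  calc K₁ v = K₁ w := hw₁.symm
    _ = vmax w := h₁m.apply_eq_vmax (hcube hwcube) hconst
    _ = K₂ w := (h₂m.apply_eq_vmax (hcube hwcube) hconst).symm
    _ = K₂ v := hw₂
end

section
/- Let I ⊆ ℝ be an interval and p = 2. A mean-type mapping M : I² → I² is weakly contractive if and only if M² (the second iterate) is contractive. -/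
open Set Filter Topology

/-
In dimension two the spread `max v - min v` of a vector does not increase under a mean-type
map, and it is preserved by `M` at `w` only if `M w` is `w` or `w` with its coordinates swapped.
So if `M (M v)` had the spread of `v`, then `M (M v) = v` or `M (M v) = M v`, the orbit of `v`
would stay in `{v, M v}` and never shrink its spread. Conversely, if `M ∘ M` is contractive,
monotonicity of the spread along orbits gives weak contractivity with `n₀ = 2`.
-/

noncomputable def spread {p : ℕ} (v : Fin p → ℝ) : ℝ := vmax v - vmin v

section Spread

variable {p : ℕ}

lemma exists_apply_eq_vmin [Nonempty (Fin p)] (v : Fin p → ℝ) : ∃ i, v i = vmin v :=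
  exists_eq_ciInf_of_finite

lemma exists_apply_eq_vmax [Nonempty (Fin p)] (v : Fin p → ℝ) : ∃ i, v i = vmax v :=
  exists_eq_ciSup_of_finite

lemma spread_le_of_forall_mem_Icc {v w : Fin p → ℝ} (h : ∀ i, w i ∈ Icc (vmin v) (vmax v)) :
    spread w ≤ spread v := by
  rcases isEmpty_or_nonempty (Fin p) with hp | hp
  · simp [spread, vmax, vmin]
  · obtain ⟨i, hi⟩ := exists_apply_eq_vmax w
    obtain ⟨j, hj⟩ := exists_apply_eq_vmin w
    rw [spread, spread, ← hi, ← hj]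
    linarith [(h i).2, (h j).1]

end Spread

lemma vmin_two (v : Fin 2 → ℝ) : vmin v = min (v 0) (v 1) :=
  le_antisymm (le_min (ciInf_le (finite_range v).bddBelow 0) (ciInf_le (finite_range v).bddBelow 1))
    (le_ciInf fun i => by fin_cases i <;> [exact min_le_left _ _; exact min_le_right _ _])

lemma vmax_two (v : Fin 2 → ℝ) : vmax v = max (v 0) (v 1) :=
  le_antisymm (ciSup_le fun i => by fin_cases i <;> [exact le_max_left _ _; exact le_max_right _ _])
    (max_le (le_ciSup (finite_range v).bddAbove 0) (le_ciSup (finite_range v).bddAbove 1))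

lemma spread_two (v : Fin 2 → ℝ) : spread v = |v 0 - v 1| := by
  rw [spread, vmax_two, vmin_two, max_sub_min_eq_abs']

lemma eq_and_eq_or_eq_and_eq_of_abs_sub_eq {a b x y : ℝ} (hx : x ∈ uIcc a b) (hy : y ∈ uIcc a b)
    (h : |x - y| = |a - b|) : x = a ∧ y = b ∨ x = b ∧ y = a := by
  rw [mem_uIcc] at hx hy
  rcases abs_cases (x - y) with ⟨hxy, -⟩ | ⟨hxy, -⟩ <;>
    rcases abs_cases (a - b) with ⟨hab, -⟩ | ⟨hab, -⟩ <;>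
    rw [hxy, hab] at h <;> grind

lemma Function.iterate_eq_self_or_eq_apply {α : Type*} {f : α → α} {x : α}
    (h : f (f x) = x ∨ f (f x) = f x) (n : ℕ) : f^[n] x = x ∨ f^[n] x = f x := by
  have hmaps : MapsTo f {x, f x} {x, f x} := by
    rintro y (rfl | rfl)
    · exact Or.inr rfl
    · exact h
  exact hmaps.iterate n (mem_insert x _)

namespace MeanType

variable {I : Set ℝ}

section

variable {p : ℕ} {M : (Fin p → ℝ) → (Fin p → ℝ)}

lemma spread_le (hM : MeanType I p M) {v : Fin p → ℝ} (hv : v ∈ box I p) :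
    spread (M v) ≤ spread v :=
  spread_le_of_forall_mem_Icc fun i => hM v hv i

lemma mapsTo_box (hM : MeanType I p M) (hI : I.OrdConnected) : MapsTo M (box I p) (box I p) := by
  intro v hv i
  have : Nonempty (Fin p) := ⟨i⟩
  obtain ⟨j, hj⟩ := exists_apply_eq_vmin v
  obtain ⟨k, hk⟩ := exists_apply_eq_vmax v
  exact hI.out (hj ▸ hv j) (hk ▸ hv k) (hM v hv i)

lemma antitone_spread_iterate (hM : MeanType I p M) (hI : I.OrdConnected) {v : Fin p → ℝ}
    (hv : v ∈ box I p) : Antitone fun n => spread (M^[n] v) :=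
  antitone_nat_of_succ_le fun n => by
    rw [Function.iterate_succ_apply']
    exact hM.spread_le ((hM.mapsTo_box hI).iterate n hv)

lemma weaklyContractive_of_contractive_iterate (hM : MeanType I p M) (hI : I.OrdConnected)
    {k : ℕ} (h : Contractive I p M^[k]) : WeaklyContractive I p M :=
  fun v hv hnc => ⟨k, fun _ hn => (hM.antitone_spread_iterate hI hv hn).trans_lt (h v hv hnc)⟩

end

variable {M : (Fin 2 → ℝ) → (Fin 2 → ℝ)}

lemma eq_or_eq_comp_swap_of_spread_eq (hM : MeanType I 2 M) {w : Fin 2 → ℝ} (hw : w ∈ box I 2)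
    (h : spread (M w) = spread w) : M w = w ∨ M w = w ∘ Equiv.swap 0 1 := by
  have hmem : ∀ i, M w i ∈ uIcc (w 0) (w 1) := fun i => by
    have hi := hM w hw i
    rw [vmin_two, vmax_two] at hi
    exact hi
  rw [spread_two, spread_two] at h
  rcases eq_and_eq_or_eq_and_eq_of_abs_sub_eq (hmem 0) (hmem 1) h with ⟨h0, h1⟩ | ⟨h0, h1⟩
  · exact Or.inl (funext <| Fin.forall_fin_two.2 ⟨h0, h1⟩)
  · exact Or.inr (funext <| Fin.forall_fin_two.2 ⟨h0, h1⟩)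

lemma spread_iterate_eq (hM : MeanType I 2 M) (hI : I.OrdConnected) {v : Fin 2 → ℝ}
    (hv : v ∈ box I 2) (h : spread v ≤ spread (M (M v))) (n : ℕ) :
    spread (M^[n] v) = spread v := by
  have hMv := hM.mapsTo_box hI hv
  have h₁ : spread (M v) = spread v :=
    le_antisymm (hM.spread_le hv) (h.trans (hM.spread_le hMv))
  have h₂ : spread (M (M v)) = spread (M v) := le_antisymm (hM.spread_le hMv) (h₁ ▸ h)
  have hpair : M (M v) = v ∨ M (M v) = M v := by
    rcases hM.eq_or_eq_comp_swap_of_spread_eq hv h₁ with hfix | hswap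
    · simp [hfix]
    rcases hM.eq_or_eq_comp_swap_of_spread_eq hMv h₂ with hfix' | hswap'
    · exact Or.inr hfix'
    · left
      rw [hswap', hswap]
      funext i
      simp
  rcases Function.iterate_eq_self_or_eq_apply hpair n with hn | hn
  · rw [hn]
  · rw [hn, h₁]

end MeanType

theorem stmt12 (I : Set ℝ) (hI : I.OrdConnected)
    (M : (Fin 2 → ℝ) → (Fin 2 → ℝ)) (hMT : MeanType I 2 M) :
    WeaklyContractive I 2 M ↔ Contractive I 2 (M ∘ M) := by
  refine ⟨fun hW v hv hnc => ?_, hMT.weaklyContractive_of_contractive_iterate hI (k := 2)⟩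
  by_contra! hge
  obtain ⟨n₀, hn₀⟩ := hW v hv hnc
  exact (hn₀ n₀ le_rfl).ne (hMT.spread_iterate_eq hI hv hge n₀)
end
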